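/- Let 1 ≤ k ≤ n/2. For all skew-Hermitian X, Y ∈ ℂ^{n×n} of the block form [[0, −B†],[B, 0]] (B ∈ ℂ^{(n−k)×k}) satisfying (1/2)‖X‖_F² = (1/2)‖Y‖_F² = 1 and Re tr(X†Y) = 0, the sectional curvature of the Grassmann manifold satisfies K(X,Y) = (1/8)·‖[X,Y]‖_F² + (3/8)·‖Π([X,Y])‖_F² ≤ 4, where [X,Y] = XY − YX and Π(Z) denotes the block-diagonal part of Z (the upper-left k×k and lower-right (n−k)×(n−k) blocks retained, off-diagonal blocks set to zero). -/
import Mathlib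

open Matrix

/-- The Frobenius norm of a complex matrix. -/
noncomputable def frobNorm {m n : Type*} [Fintype m] [Fintype n]
    (M : Matrix m n ℂ) : ℝ :=
  Real.sqrt (∑ i, ∑ j, ‖M i j‖ ^ 2)

/-- Projection onto the vertical subalgebra `u(k) ⊕ u(n−k)` of the Grassmann manifold:
keep only the two diagonal blocks. -/
def verticalProjGrassmann (k m : ℕ) (Z : Matrix (Fin k ⊕ Fin m) (Fin k ⊕ Fin m) ℂ) :
    Matrix (Fin k ⊕ Fin m) (Fin k ⊕ Fin m) ℂ :=
  Matrix.fromBlocks (Z.toBlocks₁₁) 0 0 (Z.toBlocks₂₂)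

attribute [local instance] Matrix.frobeniusSeminormedAddCommGroup

private lemma frobNorm_eq_norm {m n : Type*} [Fintype m] [Fintype n] (M : Matrix m n ℂ) :
    frobNorm M = ‖M‖ := by
  rw [frobNorm, Matrix.frobenius_norm_def, Real.sqrt_eq_rpow]
  norm_num [Real.rpow_two]

private lemma sumSq_eq_norm_sq {m n : Type*} [Fintype m] [Fintype n] (M : Matrix m n ℂ) :
    ∑ i, ∑ j, ‖M i j‖ ^ 2 = ‖M‖ ^ 2 := by
  rw [← frobNorm_eq_norm, frobNorm, Real.sq_sqrt]
  positivity

private lemma frobNorm_sq_fromBlocks {k m k' m' : ℕ}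
    (A : Matrix (Fin k) (Fin k') ℂ) (B : Matrix (Fin k) (Fin m') ℂ)
    (C : Matrix (Fin m) (Fin k') ℂ) (D : Matrix (Fin m) (Fin m') ℂ) :
    frobNorm (Matrix.fromBlocks A B C D) ^ 2 = ‖A‖ ^ 2 + ‖B‖ ^ 2 + ‖C‖ ^ 2 + ‖D‖ ^ 2 := by
  rw [frobNorm, Real.sq_sqrt (by positivity)]
  rw [← sumSq_eq_norm_sq A, ← sumSq_eq_norm_sq B, ← sumSq_eq_norm_sq C, ← sumSq_eq_norm_sq D]
  simp only [Fintype.sum_sum_type, fromBlocks_apply₁₁, fromBlocks_apply₁₂,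
    fromBlocks_apply₂₁, fromBlocks_apply₂₂, Finset.sum_add_distrib]
  ring

/-- **Sectional curvature bound for the Grassmann manifold** `G_{k,n}` (`1 ≤ k ≤ n/2`,
`m = n − k ≥ k`): for orthonormal horizontal tangents `X, Y` of block form
`[[0, −Bᴴ],[B, 0]]`, the sectional curvature
`K(X,Y) = (1/8)‖[X,Y]‖_F² + (3/8)‖[X,Y]^∥‖_F²` is at most `4`. -/
theorem grassmann_sectional_curvature_le (k m : ℕ) (hk : 1 ≤ k) (hkm : k ≤ m)
    (B₁ B₂ : Matrix (Fin m) (Fin k) ℂ) :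
    let X := Matrix.fromBlocks 0 (-B₁ᴴ) B₁ 0
    let Y := Matrix.fromBlocks 0 (-B₂ᴴ) B₂ 0
    (1 / 2) * frobNorm X ^ 2 = 1 →
    (1 / 2) * frobNorm Y ^ 2 = 1 →
    (Matrix.trace (Xᴴ * Y)).re = 0 →
    (1 / 8) * frobNorm (X * Y - Y * X) ^ 2 +
      (3 / 8) * frobNorm (verticalProjGrassmann k m (X * Y - Y * X)) ^ 2 ≤ 4 := by
  intro X Y h1 h2 _h3
  set C : Matrix (Fin k) (Fin k) ℂ := B₂ᴴ * B₁ - B₁ᴴ * B₂ with hC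
  set D : Matrix (Fin m) (Fin m) ℂ := B₂ * B₁ᴴ - B₁ * B₂ᴴ with hD
  have hZ : X * Y - Y * X = Matrix.fromBlocks C 0 0 D := by
    show Matrix.fromBlocks 0 (-B₁ᴴ) B₁ 0 * Matrix.fromBlocks 0 (-B₂ᴴ) B₂ 0 -
      Matrix.fromBlocks 0 (-B₂ᴴ) B₂ 0 * Matrix.fromBlocks 0 (-B₁ᴴ) B₁ 0 = _
    rw [Matrix.fromBlocks_multiply, Matrix.fromBlocks_multiply]
    ext i j
    rcases i with i | i <;> rcases j with j | j <;>
      simp [hC, hD, Matrix.sub_apply, Matrix.neg_mul, Matrix.mul_neg] <;> ring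
  have hV : verticalProjGrassmann k m (Matrix.fromBlocks C 0 0 D) = Matrix.fromBlocks C 0 0 D := by
    rw [verticalProjGrassmann, Matrix.toBlocks_fromBlocks₁₁, Matrix.toBlocks_fromBlocks₂₂]
  have hB1 : ‖B₁‖ ^ 2 = 1 := by
    have := h1
    rw [show X = Matrix.fromBlocks 0 (-B₁ᴴ) B₁ 0 from rfl, frobNorm_sq_fromBlocks] at this
    simp only [norm_zero, norm_neg, Matrix.frobenius_norm_conjTranspose] at this
    nlinarith
  have hB2 : ‖B₂‖ ^ 2 = 1 := by
    have := h2
    rw [show Y = Matrix.fromBlocks 0 (-B₂ᴴ) B₂ 0 from rfl, frobNorm_sq_fromBlocks] at this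
    simp only [norm_zero, norm_neg, Matrix.frobenius_norm_conjTranspose] at this
    nlinarith
  have hCle : ‖C‖ ≤ ‖B₂‖ * ‖B₁‖ + ‖B₁‖ * ‖B₂‖ := by
    calc ‖C‖ ≤ ‖B₂ᴴ * B₁‖ + ‖B₁ᴴ * B₂‖ := norm_sub_le _ _
    _ ≤ ‖B₂ᴴ‖ * ‖B₁‖ + ‖B₁ᴴ‖ * ‖B₂‖ := by
        gcongr <;> exact Matrix.frobenius_norm_mul _ _
    _ = ‖B₂‖ * ‖B₁‖ + ‖B₁‖ * ‖B₂‖ := by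
        rw [Matrix.frobenius_norm_conjTranspose, Matrix.frobenius_norm_conjTranspose]
  have hDle : ‖D‖ ≤ ‖B₂‖ * ‖B₁‖ + ‖B₁‖ * ‖B₂‖ := by
    calc ‖D‖ ≤ ‖B₂ * B₁ᴴ‖ + ‖B₁ * B₂ᴴ‖ := norm_sub_le _ _
    _ ≤ ‖B₂‖ * ‖B₁ᴴ‖ + ‖B₁‖ * ‖B₂ᴴ‖ := by
        gcongr <;> exact Matrix.frobenius_norm_mul _ _
    _ = ‖B₂‖ * ‖B₁‖ + ‖B₁‖ * ‖B₂‖ := by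
        rw [Matrix.frobenius_norm_conjTranspose, Matrix.frobenius_norm_conjTranspose]
  rw [hZ, hV, frobNorm_sq_fromBlocks]
  simp only [norm_zero]
  nlinarith [norm_nonneg C, norm_nonneg D, norm_nonneg B₁, norm_nonneg B₂,
    sq_nonneg (‖B₁‖ - 1), sq_nonneg (‖B₂‖ - 1), sq_nonneg (‖C‖ + ‖D‖), sq_nonneg (‖C‖ - ‖D‖)]
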